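/- arXiv:2402.19283 — 11 statements merged into one kernel-verified Lean document; each statement's English description precedes it below -/
import Mathlib

section
/- Let n ≥ 1 and let u : Fin (n+1) → ℂ satisfy sinh(u k − u j) ≠ 0 for all j ≠ k. Then ∑_{j=0}^{n} ∏_{k ≠ j} coth(u k − u j) = (1 + (−1)^n)/2. -/
open Finset Polynomial

lemma key_rational (n : ℕ) (x : Fin (n + 1) → ℂ) (h0 : ∀ j, x j ≠ 0)
    (hne : ∀ j k : Fin (n + 1), j ≠ k → x j ≠ x k) :
    ∑ j : Fin (n + 1), ∏ k ∈ Finset.univ.erase j, (x k + x j) / (x k - x j)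
      = (1 + (-1 : ℂ) ^ n) / 2 := by
  classical
  have hinj : Set.InjOn x (Finset.univ : Finset (Fin (n+1))) := by
    intro a _ b _ hab
    by_contra h
    exact hne a b h hab
  set P : ℂ[X] := ∏ k : Fin (n+1), (X + C (x k)) with hP
  set Q : ℂ[X] := ∏ k : Fin (n+1), (X - C (x k)) with hQ
  have hPm : P.Monic := monic_prod_of_monic _ _ fun k _ => monic_X_add_C _
  have hQm : Q.Monic := monic_prod_of_monic _ _ fun k _ => monic_X_sub_C _
  have hPdeg : P.natDegree = n + 1 := by
    rw [hP, natDegree_prod_of_monic _ _ fun k _ => monic_X_add_C _]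
    simp [natDegree_X_add_C]
  have hQdeg : Q.natDegree = n + 1 := by
    rw [hQ, natDegree_prod_of_monic _ _ fun k _ => monic_X_sub_C _]
    simp [natDegree_X_sub_C]
  have hPd : P.degree = ((n+1 : ℕ) : WithBot ℕ) := by
    rw [Polynomial.degree_eq_natDegree hPm.ne_zero, hPdeg]
  have hQd : Q.degree = ((n+1 : ℕ) : WithBot ℕ) := by
    rw [Polynomial.degree_eq_natDegree hQm.ne_zero, hQdeg]
  have hdeglt : (P - Q).degree < (Finset.univ : Finset (Fin (n+1))).card := by
    rcases eq_or_ne P Q with h | h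
    · rw [h, sub_self, degree_zero]
      exact WithBot.bot_lt_coe _
    have h4 := degree_sub_lt (hPd.trans hQd.symm) hPm.ne_zero
      (hPm.leadingCoeff.trans hQm.leadingCoeff.symm)
    rw [hPd] at h4
    rw [show ((Finset.univ : Finset (Fin (n+1))).card) = n + 1 from by simp]
    exact h4
  have hinterp := Lagrange.eq_interpolate (f := P - Q) hinj hdeglt
  have heval := congrArg (Polynomial.eval 0) hinterp
  rw [Lagrange.interpolate_apply] at heval
  simp only [eval_finset_sum, eval_mul, eval_C] at heval
  have hL : Polynomial.eval 0 (P - Q) = (1 + (-1:ℂ)^n) * ∏ k, x k := by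
    simp only [eval_sub, hP, hQ, eval_prod, eval_add, eval_X, eval_C, zero_add, zero_sub]
    have : ∀ k : Fin (n+1), -x k = (-1) * x k := fun k => by ring
    rw [Finset.prod_congr rfl fun k _ => this k, Finset.prod_mul_distrib, Finset.prod_const,
      Finset.card_univ, Fintype.card_fin, pow_succ]
    ring
  have hEv : ∀ i : Fin (n+1), Polynomial.eval (x i) (P - Q)
      = 2 * x i * ∏ k ∈ univ.erase i, (x i + x k) := by
    intro i
    have hQ0 : Polynomial.eval (x i) Q = 0 := by
      rw [hQ, eval_prod]
      exact Finset.prod_eq_zero (mem_univ i) (by simp)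
    rw [eval_sub, hQ0, sub_zero, hP, eval_prod]
    simp only [eval_add, eval_X, eval_C]
    rw [← Finset.mul_prod_erase _ _ (mem_univ i)]
    ring
  have hB : ∀ i : Fin (n+1), Polynomial.eval 0 (Lagrange.basis univ x i)
      = ∏ k ∈ univ.erase i, ((x i - x k)⁻¹ * (-x k)) := by
    intro i
    rw [Lagrange.basis, eval_prod]
    refine Finset.prod_congr rfl fun k hk => ?_
    simp [Lagrange.basisDivisor]
  rw [hL] at heval
  have hterm : ∀ i : Fin (n+1),
      Polynomial.eval (x i) (P - Q) * Polynomial.eval 0 (Lagrange.basis univ x i)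
        = 2 * (∏ k, x k) * ∏ k ∈ univ.erase i, (x k + x i) / (x k - x i) := by
    intro i
    have h1 : (∏ k, x k) = x i * ∏ k ∈ univ.erase i, x k :=
      (Finset.mul_prod_erase _ _ (mem_univ i)).symm
    calc Polynomial.eval (x i) (P - Q) * Polynomial.eval 0 (Lagrange.basis univ x i)
        = (2 * x i) * ((∏ k ∈ univ.erase i, (x i + x k)) *
            ∏ k ∈ univ.erase i, ((x i - x k)⁻¹ * (-x k))) := by
          rw [hEv i, hB i]; ring
      _ = (2 * x i) * ∏ k ∈ univ.erase i, ((x i + x k) * ((x i - x k)⁻¹ * (-x k))) := by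
          simp only [Finset.prod_mul_distrib]
      _ = (2 * x i) * ∏ k ∈ univ.erase i, (x k * ((x k + x i) / (x k - x i))) := by
          congr 1
          refine Finset.prod_congr rfl fun k hk => ?_
          have hik : x i ≠ x k := hne i k (Finset.ne_of_mem_erase hk).symm
          have ha : x i - x k ≠ 0 := sub_ne_zero.mpr hik
          have hb : x k - x i ≠ 0 := sub_ne_zero.mpr hik.symm
          field_simp
          ring
      _ = 2 * (∏ k, x k) * ∏ k ∈ univ.erase i, (x k + x i) / (x k - x i) := by
          simp only [Finset.prod_mul_distrib, h1]; ring
  rw [Finset.sum_congr rfl fun i _ => hterm i, ← Finset.mul_sum] at heval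
  have hprodne : (∏ k, x k) ≠ 0 := Finset.prod_ne_zero_iff.mpr fun k _ => h0 k
  have h2 : (1 + (-1:ℂ)^n) * ∏ k, x k
      = (2 * ∑ j : Fin (n+1), ∏ k ∈ univ.erase j, (x k + x j) / (x k - x j)) * ∏ k, x k := by
    rw [heval]; ring
  have h3 := mul_right_cancel₀ hprodne h2
  linear_combination -h3 / 2

/-- For `n ≥ 1` and `u : Fin (n+1) → ℂ` with `sinh (u k - u j) ≠ 0`
for all `j ≠ k`, one has `∑_j ∏_{k ≠ j} coth (u k - u j) = (1 + (-1)^n)/2`. -/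
theorem sum_prod_coth_eq (n : ℕ) (hn : 1 ≤ n) (u : Fin (n + 1) → ℂ)
    (hu : ∀ j k : Fin (n + 1), j ≠ k → Complex.sinh (u k - u j) ≠ 0) :
    ∑ j : Fin (n + 1), ∏ k ∈ Finset.univ.erase j,
        Complex.cosh (u k - u j) / Complex.sinh (u k - u j)
      = (1 + (-1 : ℂ) ^ n) / 2 := by
  classical
  set x : Fin (n + 1) → ℂ := fun j => Complex.exp (2 * u j) with hx
  have h0 : ∀ j, x j ≠ 0 := fun j => Complex.exp_ne_zero _
  have e1 : ∀ j k : Fin (n + 1), x k + x j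
      = Complex.exp (u j + u k) * (2 * Complex.cosh (u k - u j)) := by
    intro j k
    have A : Complex.exp (u j + u k) * Complex.exp (u k - u j) = Complex.exp (2 * u k) := by
      rw [← Complex.exp_add]; congr 1; ring
    have B : Complex.exp (u j + u k) * Complex.exp (-(u k - u j)) = Complex.exp (2 * u j) := by
      rw [← Complex.exp_add]; congr 1; ring
    show Complex.exp (2 * u k) + Complex.exp (2 * u j) = _
    rw [Complex.cosh, ← A, ← B]; ring
  have e2 : ∀ j k : Fin (n + 1), x k - x j
      = Complex.exp (u j + u k) * (2 * Complex.sinh (u k - u j)) := by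
    intro j k
    have A : Complex.exp (u j + u k) * Complex.exp (u k - u j) = Complex.exp (2 * u k) := by
      rw [← Complex.exp_add]; congr 1; ring
    have B : Complex.exp (u j + u k) * Complex.exp (-(u k - u j)) = Complex.exp (2 * u j) := by
      rw [← Complex.exp_add]; congr 1; ring
    show Complex.exp (2 * u k) - Complex.exp (2 * u j) = _
    rw [Complex.sinh, ← A, ← B]; ring
  have hne : ∀ j k : Fin (n + 1), j ≠ k → x j ≠ x k := by
    intro j k hjk h
    apply hu j k hjk
    have h2 : Complex.exp (u j + u k) * (2 * Complex.sinh (u k - u j)) = 0 := by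
      rw [← e2 j k, h, sub_self]
    rcases mul_eq_zero.mp h2 with h3 | h3
    · exact absurd h3 (Complex.exp_ne_zero _)
    · rcases mul_eq_zero.mp h3 with h4 | h4
      · exact absurd h4 two_ne_zero
      · exact h4
  have hterm : ∀ j k : Fin (n + 1), j ≠ k →
      Complex.cosh (u k - u j) / Complex.sinh (u k - u j) = (x k + x j) / (x k - x j) := by
    intro j k hjk
    rw [e1 j k, e2 j k, mul_div_mul_left _ _ (Complex.exp_ne_zero _),
        mul_div_mul_left _ _ (two_ne_zero)]
  calc ∑ j : Fin (n + 1), ∏ k ∈ Finset.univ.erase j,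
        Complex.cosh (u k - u j) / Complex.sinh (u k - u j)
      = ∑ j : Fin (n + 1), ∏ k ∈ Finset.univ.erase j, (x k + x j) / (x k - x j) := by
        refine Finset.sum_congr rfl fun j _ => Finset.prod_congr rfl fun k hk => ?_
        exact hterm j k (Finset.ne_of_mem_erase hk).symm
    _ = (1 + (-1 : ℂ) ^ n) / 2 := key_rational n x h0 hne
end

section
/- Let n ≥ 1, let z : Fin (n+1) → ℝ be arbitrary, and let α : Fin (n+1) → ℝ satisfy 0 ≤ α j < π/2 for every j and (z j, α j) ≠ (z k, α k) whenever j ≠ k. Then for every pair j ≠ k one has sinh((z k − z j) + i(α k − α j)) ≠ 0, and ∑_{j=0}^{n} ∏_{k ≠ j} coth((z k − z j) + i(α k − α j)) = (1 + (−1)^n)/2. -/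
/-!
With `w j = z j + i α j` and `t j = exp (2 w j)` one has
`coth (w k - w j) = (t k + t j) / (t k - t j)`, and the bounds on `α` keep `2 α j` in `[0, π)`,
so `t` is injective. Lagrange interpolation of the monic `∏ k, (X + t k)` at the nodes
`0, t 0, …, t n` reads off its leading coefficient `1` as `(-1)^(n+1)` (from the node `0`) plus
`2 ∏_{k ≠ j} (t j + t k) / (t j - t k)` for each node `t j`.
-/

open Real Polynomial Finset

theorem two_mul_sum_prod_add_div_sub {F ι : Type*} [Field F] [Fintype ι] [DecidableEq ι]
    {t : ι → F} (ht : Function.Injective t) (ht0 : ∀ i, t i ≠ 0) :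
    2 * ∑ i, ∏ k ∈ univ.erase i, (t i + t k) / (t i - t k) = 1 - (-1) ^ Fintype.card ι := by
  let v : Option ι → F := fun o => o.elim 0 t
  have hv : Set.InjOn v (univ : Finset (Option ι)) := by
    rintro (_ | a) - (_ | b) - h
    exacts [rfl, absurd h.symm (ht0 b), absurd h (ht0 a), congrArg some (ht h)]
  let P : F[X] := ∏ k, (X + C (t k))
  have hP : P.Monic := monic_prod_of_monic _ _ fun k _ => monic_X_add_C (t k)
  have hdeg : #(univ : Finset (Option ι)) = P.degree + 1 := by
    rw [degree_prod]
    simp [degree_X_add_C]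
  have key := Lagrange.leadingCoeff_eq_sum hv hdeg
  have erase_none : (univ : Finset (Option ι)).erase none = univ.map Function.Embedding.some := by
    ext o; cases o <;> simp
  have erase_some (i : ι) :
      (univ : Finset (Option ι)).erase (some i) = insertNone (univ.erase i) := by
    ext o; cases o <;> simp [eq_comm]
  have at_zero :
      P.eval (v none) / ∏ j ∈ univ.erase none, (v none - v j) = (-1) ^ Fintype.card ι := by
    simp [erase_none, P, v, eval_prod, ← prod_div_distrib, ht0]
  have at_node (i : ι) : P.eval (v (some i)) / ∏ j ∈ univ.erase (some i), (v (some i) - v j) =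
      2 * ∏ k ∈ univ.erase i, (t i + t k) / (t i - t k) := by
    simp only [erase_some, prod_insertNone, P, eval_prod, v]
    simp only [eval_add, eval_X, eval_C, Option.elim_none, Option.elim_some, sub_zero]
    rw [← mul_prod_erase univ _ (mem_univ i), prod_div_distrib]
    field_simp [ht0 i]
    ring
  rw [hP.leadingCoeff, Fintype.sum_option, at_zero, Finset.sum_congr rfl fun i _ => at_node i,
    ← mul_sum] at key
  linear_combination -key

theorem sum_prod_add_div_sub {F : Type*} [Field F] [NeZero (2 : F)] {m : ℕ}
    {t : Fin (m + 1) → F} (ht : Function.Injective t) (ht0 : ∀ i, t i ≠ 0) :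
    ∑ j, ∏ k ∈ univ.erase j, (t k + t j) / (t k - t j) = (1 + (-1) ^ m) / 2 := by
  have flip (j : Fin (m + 1)) : ∏ k ∈ univ.erase j, (t k + t j) / (t k - t j) =
      (-1) ^ m * ∏ k ∈ univ.erase j, (t j + t k) / (t j - t k) := by
    calc _ = ∏ k ∈ univ.erase j, (-1) * ((t j + t k) / (t j - t k)) :=
          prod_congr rfl fun k _ => by rw [add_comm, ← neg_sub, div_neg, neg_one_mul]
      _ = _ := by rw [prod_mul_distrib, prod_const, card_erase_of_mem (mem_univ j), card_fin,
          add_tsub_cancel_right]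
  have h := two_mul_sum_prod_add_div_sub ht ht0
  have hsq : ((-1 : F) ^ m) ^ 2 = 1 := by rw [← pow_mul, mul_comm, pow_mul, neg_one_sq, one_pow]
  rw [Fintype.card_fin, pow_succ] at h
  rw [sum_congr rfl fun j _ => flip j, ← mul_sum, eq_div_iff two_ne_zero]
  linear_combination (-1) ^ m * h + hsq

namespace Complex

theorem two_mul_exp_add_mul_sinh_sub (a b : ℂ) :
    2 * exp (a + b) * sinh (a - b) = exp (2 * a) - exp (2 * b) := by
  rw [sinh, mul_right_comm, mul_div_cancel₀ _ two_ne_zero, sub_mul, ← exp_add, ← exp_add]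
  ring_nf

theorem two_mul_exp_add_mul_cosh_sub (a b : ℂ) :
    2 * exp (a + b) * cosh (a - b) = exp (2 * a) + exp (2 * b) := by
  rw [cosh, mul_right_comm, mul_div_cancel₀ _ two_ne_zero, add_mul, ← exp_add, ← exp_add]
  ring_nf

theorem sinh_sub_eq_zero_iff {a b : ℂ} : sinh (a - b) = 0 ↔ exp (2 * a) = exp (2 * b) := by
  rw [← sub_eq_zero (a := exp (2 * a)), ← two_mul_exp_add_mul_sinh_sub]
  simp [exp_ne_zero]

theorem cosh_sub_div_sinh_sub (a b : ℂ) :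
    cosh (a - b) / sinh (a - b) = (exp (2 * a) + exp (2 * b)) / (exp (2 * a) - exp (2 * b)) := by
  rw [← two_mul_exp_add_mul_sinh_sub, ← two_mul_exp_add_mul_cosh_sub,
    mul_div_mul_left _ _ (mul_ne_zero two_ne_zero (exp_ne_zero _))]

theorem injOn_exp_two_mul :
    Set.InjOn (fun w => exp (2 * w)) {w : ℂ | -(π / 2) < w.im ∧ w.im ≤ π / 2} := by
  rintro v ⟨hv₁, hv₂⟩ w ⟨hw₁, hw₂⟩ h
  have := exp_inj_of_neg_pi_lt_of_le_pi (x := 2 * v) (y := 2 * w) (by simp; linarith)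
    (by simp; linarith) (by simp; linarith) (by simp; linarith) h
  simpa using this

end Complex

theorem sum_prod_coth_shifted_general (n : ℕ) (z : Fin (n + 1) → ℝ)
    (α : Fin (n + 1) → ℝ) (hα : ∀ j, 0 ≤ α j ∧ α j < π / 2)
    (hne : ∀ j k : Fin (n + 1), j ≠ k → (z j, α j) ≠ (z k, α k)) :
    (∀ j k : Fin (n + 1), j ≠ k →
        Complex.sinh ((↑(z k) - ↑(z j)) + Complex.I * (↑(α k) - ↑(α j))) ≠ 0) ∧
      ∑ j : Fin (n + 1), ∏ k ∈ Finset.univ.erase j,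
          Complex.cosh ((↑(z k) - ↑(z j)) + Complex.I * (↑(α k) - ↑(α j))) /
            Complex.sinh ((↑(z k) - ↑(z j)) + Complex.I * (↑(α k) - ↑(α j)))
        = (1 + (-1 : ℂ) ^ n) / 2 := by
  let w : Fin (n + 1) → ℂ := fun j => z j + Complex.I * α j
  have hargs (j k : Fin (n + 1)) :
      (↑(z k) - ↑(z j)) + Complex.I * (↑(α k) - ↑(α j)) = w k - w j := by
    ring
  have hw_inj : Function.Injective w := fun j k h => by
    by_contra hjk
    exact hne j k hjk (by simpa [w, Complex.ext_iff] using h)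
  have hw_strip (j : Fin (n + 1)) : -(π / 2) < (w j).im ∧ (w j).im ≤ π / 2 := by
    simp only [w, Complex.add_im, Complex.ofReal_im, Complex.I_mul_im, Complex.ofReal_re, zero_add]
    constructor <;> linarith [hα j, pi_pos]
  have ht : Function.Injective fun j => Complex.exp (2 * w j) := fun j k h =>
    hw_inj (Complex.injOn_exp_two_mul (hw_strip j) (hw_strip k) h)
  refine ⟨fun j k hjk => ?_, ?_⟩
  · rw [hargs, Ne, Complex.sinh_sub_eq_zero_iff]
    exact ht.ne hjk.symm
  · simp only [hargs, Complex.cosh_sub_div_sinh_sub]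
    exact sum_prod_add_div_sub ht fun j => Complex.exp_ne_zero _

/-- For `n ≥ 1`, arbitrary `z : Fin (n+1) → ℝ`, and angles
`α : Fin (n+1) → ℝ` with `0 ≤ α j < π/2` and `(z j, α j) ≠ (z k, α k)` for `j ≠ k`,
the arguments `(z k - z j) + i (α k - α j)` have nonvanishing `sinh` for `j ≠ k`, and
`∑_j ∏_{k ≠ j} coth ((z k - z j) + i (α k - α j)) = (1 + (-1)^n)/2`. -/
theorem sum_prod_coth_shifted (n : ℕ) (hn : 1 ≤ n) (z : Fin (n + 1) → ℝ)
    (α : Fin (n + 1) → ℝ) (hα : ∀ j, 0 ≤ α j ∧ α j < π / 2)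
    (hne : ∀ j k : Fin (n + 1), j ≠ k → (z j, α j) ≠ (z k, α k)) :
    (∀ j k : Fin (n + 1), j ≠ k →
        Complex.sinh ((↑(z k) - ↑(z j)) + Complex.I * (↑(α k) - ↑(α j))) ≠ 0) ∧
      ∑ j : Fin (n + 1), ∏ k ∈ Finset.univ.erase j,
          Complex.cosh ((↑(z k) - ↑(z j)) + Complex.I * (↑(α k) - ↑(α j))) /
            Complex.sinh ((↑(z k) - ↑(z j)) + Complex.I * (↑(α k) - ↑(α j)))
        = (1 + (-1 : ℂ) ^ n) / 2 :=
  sum_prod_coth_shifted_general n z α hα hne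
end

section
/- Let n ≥ 1 and let x : Fin (n+1) → ℂ be pairwise distinct (x j ≠ x k for j ≠ k). Then ∑_{j=0}^{n} ∏_{k ≠ j} (x k + x j)/(x k − x j) = (1 + (−1)^n)/2. -/
open Polynomial Finset

lemma lemA (n : ℕ) (x : Fin (n + 1) → ℂ)
    (hx : ∀ j k : Fin (n + 1), j ≠ k → x j ≠ x k) (hx0 : ∀ j, x j ≠ 0) :
    ∑ j : Fin (n + 1), ∏ k ∈ Finset.univ.erase j, (x k + x j) / (x k - x j)
      = (1 + (-1 : ℂ) ^ n) / 2 := by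
  have hinj : Set.InjOn x (Finset.univ : Finset (Fin (n+1))) := by
    intro a _ b _ h
    by_contra hab
    exact hx a b hab h
  set P : ℂ[X] := ∏ k : Fin (n+1), (X + C (x k)) with hPdef
  set R : ℂ[X] := ∏ k : Fin (n+1), (X - C (x k)) with hRdef
  have hPm : P.Monic := monic_prod_of_monic _ _ fun k _ => monic_X_add_C _
  have hRm : R.Monic := monic_prod_of_monic _ _ fun k _ => monic_X_sub_C _
  have hdegP : P.degree = ((n+1 : ℕ) : WithBot ℕ) := by
    rw [hPdef, degree_prod]
    simp [degree_X_add_C]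
  have hdegR : R.degree = ((n+1 : ℕ) : WithBot ℕ) := by
    rw [hRdef, degree_prod]
    simp [degree_X_sub_C]
  have hdegQ : (P - R).degree < ((Finset.univ : Finset (Fin (n+1))).card : WithBot ℕ) := by
    have h := Polynomial.degree_sub_lt (hdegP.trans hdegR.symm) hPm.ne_zero
      (by rw [hPm.leadingCoeff, hRm.leadingCoeff])
    rw [hdegP] at h
    simpa using h
  have key := Lagrange.eq_interpolate (s := Finset.univ) (v := x) hinj hdegQ
  have keyeval := congrArg (Polynomial.eval 0) key
  simp only [Lagrange.interpolate_apply, Lagrange.basis, Lagrange.basisDivisor,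
    eval_finset_sum, eval_mul, eval_C, eval_prod, eval_sub, eval_add, eval_X, hPdef, hRdef] at keyeval
  have hL : ∏ k : Fin (n+1), ((0:ℂ) + x k) - ∏ k : Fin (n+1), ((0:ℂ) - x k)
      = (1 + (-1:ℂ)^n) * ∏ k : Fin (n+1), x k := by
    have h2 : ∏ k : Fin (n+1), ((0:ℂ) - x k) = (-1:ℂ)^(n+1) * ∏ k : Fin (n+1), x k := by
      rw [show ((-1:ℂ)^(n+1)) = ∏ _k : Fin (n+1), (-1:ℂ) by simp, ← Finset.prod_mul_distrib]
      exact Finset.prod_congr rfl fun k _ => by ring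
    rw [h2, pow_succ]
    simp only [zero_add]
    ring
  have hRt : ∀ i : Fin (n+1),
      (∏ k : Fin (n+1), (x i + x k) - ∏ k : Fin (n+1), (x i - x k)) *
        ∏ k ∈ Finset.univ.erase i, (x i - x k)⁻¹ * (0 - x k)
      = (2 * ∏ k : Fin (n+1), x k) * ∏ k ∈ Finset.univ.erase i, (x k + x i) / (x k - x i) := by
    intro i
    have hz : ∏ k : Fin (n+1), (x i - x k) = 0 :=
      Finset.prod_eq_zero (Finset.mem_univ i) (by simp)
    rw [hz, sub_zero,
      ← Finset.mul_prod_erase Finset.univ (fun k => x i + x k) (Finset.mem_univ i),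
      ← Finset.mul_prod_erase Finset.univ x (Finset.mem_univ i),
      mul_assoc, ← Finset.prod_mul_distrib,
      show (2:ℂ) * (x i * ∏ k ∈ Finset.univ.erase i, x k)
        = (x i + x i) * ∏ k ∈ Finset.univ.erase i, x k by ring,
      mul_assoc, ← Finset.prod_mul_distrib]
    refine congrArg _ (Finset.prod_congr rfl fun k hk => ?_)
    have hik : x i ≠ x k := hx i k (fun h => (Finset.mem_erase.mp hk).1 h.symm)
    have hsub : x i - x k ≠ 0 := sub_ne_zero.mpr hik
    have hsub' : x k - x i ≠ 0 := sub_ne_zero.mpr (Ne.symm hik)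
    field_simp
    ring
  rw [hL, Finset.sum_congr rfl (fun i _ => hRt i), ← Finset.mul_sum] at keyeval
  have hp : ∏ k : Fin (n+1), x k ≠ 0 := Finset.prod_ne_zero_iff.mpr fun k _ => hx0 k
  rw [eq_div_iff (by norm_num : (2:ℂ) ≠ 0)]
  apply mul_left_cancel₀ hp
  linear_combination -keyeval

/-- For `n ≥ 1` and pairwise distinct `x : Fin (n+1) → ℂ`,
`∑_j ∏_{k ≠ j} (x k + x j)/(x k - x j) = (1 + (-1)^n)/2`. -/
theorem sum_prod_rational_coth (n : ℕ) (hn : 1 ≤ n) (x : Fin (n + 1) → ℂ)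
    (hx : ∀ j k : Fin (n + 1), j ≠ k → x j ≠ x k) :
    ∑ j : Fin (n + 1), ∏ k ∈ Finset.univ.erase j, (x k + x j) / (x k - x j)
      = (1 + (-1 : ℂ) ^ n) / 2 := by
  set c : ℂ := (1 + (-1 : ℂ) ^ n) / 2 with hc
  set G : ℂ[X] := ∑ j : Fin (n+1), ∏ k ∈ Finset.univ.erase j,
      (C ((x k - x j)⁻¹) * (C (x k + x j) + C 2 * X)) with hG
  have heval : ∀ t : ℂ, (∀ j, x j + t ≠ 0) → G.eval t = c := by
    intro t ht
    have hx' : ∀ j k : Fin (n+1), j ≠ k → (x j + t) ≠ (x k + t) := by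
      intro j k h hh
      exact hx j k h (add_right_cancel hh)
    have hA := lemA n (fun j => x j + t) hx' ht
    calc G.eval t
        = ∑ j : Fin (n+1), ∏ k ∈ Finset.univ.erase j,
            ((x k + t) + (x j + t)) / ((x k + t) - (x j + t)) := by
          rw [hG]
          simp only [eval_finset_sum, eval_prod, eval_mul, eval_add, eval_C, eval_X]
          refine Finset.sum_congr rfl fun j _ => Finset.prod_congr rfl fun k hk => ?_
          have hkj : x k - x j ≠ 0 :=
            sub_ne_zero.mpr (hx k j (Finset.mem_erase.mp hk).1)
          have : (x k + t) - (x j + t) = x k - x j := by ring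
          rw [this]
          field_simp
          ring
      _ = c := hA
  have hinf : {t : ℂ | (G - C c).IsRoot t}.Infinite := by
    apply Set.Infinite.mono _ ((Set.finite_range (fun j : Fin (n+1) => -x j)).infinite_compl)
    intro t htc
    have ht : ∀ j, x j + t ≠ 0 := by
      intro j hj
      exact htc ⟨j, by linear_combination -hj⟩
    simp [Polynomial.IsRoot, heval t ht]
  have hG0 : G - C c = 0 := Polynomial.eq_zero_of_infinite_isRoot _ hinf
  have hGc : G.eval 0 = c := by
    have := congrArg (eval 0) hG0
    simpa [sub_eq_zero] using this
  rw [← hGc, hG]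
  simp only [eval_finset_sum, eval_prod, eval_mul, eval_add, eval_C, eval_X]
  refine Finset.sum_congr rfl fun j _ => Finset.prod_congr rfl fun k hk => ?_
  rw [div_eq_inv_mul]
  ring
end

section
/- Let f ∈ ℚ⟦X⟧ satisfy constantCoeff f = 1 and f² = 1 + X². Then coeff m f = 0 for every odd m, and for every n ≥ 1 one has (−1)^{n+1} · coeff (2n) f > 0; in particular all coefficients of even index are nonzero. -/
/-!
Since `ℚ⟦X⟧` is a domain, a square root of `1 + X²` with constant term `1` is unique, so `f` is
the binomial series of `(1 + u) ^ (1/2)` evaluated at `u = X²`. Hence the odd coefficients vanish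
and the coefficient of `X^(2n)` is `choose (1/2) n`; the recurrence
`(n + 1) * choose a (n + 1) = choose a n * (a - n)` makes these alternate in sign for `0 < a < 1`.
-/

open PowerSeries

theorem Ring.succ_nsmul_choose_succ {R : Type*} [NonAssocRing R] [Pow R ℕ] [NatPowAssoc R]
    [BinomialRing R] (r : R) (n : ℕ) :
    (n + 1) • Ring.choose r (n + 1) = Ring.choose r n * (r - n) := by
  simpa [Nat.choose_succ_self_right, Ring.choose_one_right] using
    Ring.choose_smul_choose r (Nat.le_succ n)

theorem Ring.neg_one_pow_succ_mul_choose_pos {K : Type*} [Field K] [LinearOrder K]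
    [IsStrictOrderedRing K] {a : K} (ha₀ : 0 < a) (ha₁ : a < 1) {n : ℕ} (hn : 1 ≤ n) :
    0 < (-1) ^ (n + 1) * Ring.choose a n := by
  induction n, hn using Nat.le_induction with
  | base => simpa [Ring.choose_one_right] using ha₀
  | succ n hn ih =>
    have hrec := Ring.succ_nsmul_choose_succ a n
    rw [nsmul_eq_mul, Nat.cast_succ] at hrec
    have hn' : (1 : K) ≤ n := by exact_mod_cast hn
    have hstep : (-1) ^ (n + 1 + 1) * Ring.choose a (n + 1) =
        (-1) ^ (n + 1) * Ring.choose a n * (n - a) / (n + 1) := by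
      field_simp
      linear_combination (-(-1 : K) ^ (n + 1)) * hrec
    rw [hstep]
    exact div_pos (mul_pos ih (by linarith)) (by positivity)

theorem PowerSeries.eq_of_sq_eq_sq_of_constantCoeff_eq_one {R : Type*} [CommRing R] [IsDomain R]
    [NeZero (2 : R)] {f g : R⟦X⟧} (hf : constantCoeff f = 1) (hg : constantCoeff g = 1)
    (h : f ^ 2 = g ^ 2) : f = g := by
  refine (sq_eq_sq_iff_eq_or_eq_neg.mp h).resolve_right fun hneg => two_ne_zero (α := R) ?_
  have := congrArg constantCoeff hneg
  rw [map_neg, hf, hg] at this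
  linear_combination this

theorem PowerSeries.binomialSeries_half_sq {K : Type*} [Field K] [CharZero K] :
    binomialSeries K (2⁻¹ : K) ^ 2 = 1 + X := by
  rw [sq, ← binomialSeries_add, ← two_mul, mul_inv_cancel₀ two_ne_zero]
  simpa using binomialSeries_nat (R := K) (A := K) 1

/-- If `f ∈ ℚ⟦X⟧` satisfies `constantCoeff f = 1` and `f² = 1 + X²`
(the Taylor series of `√(1+u²)`), then all odd coefficients of `f` vanish, and for
`n ≥ 1` the coefficient of `X^(2n)` has sign `(-1)^(n+1)`; in particular all
even-index coefficients are nonzero. -/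
theorem sqrt_one_add_sq_coeffs (f : PowerSeries ℚ)
    (h0 : constantCoeff f = 1) (h2 : f ^ 2 = 1 + X ^ 2) :
    (∀ m : ℕ, Odd m → coeff m f = 0) ∧
      (∀ n : ℕ, 1 ≤ n → 0 < (-1 : ℚ) ^ (n + 1) * coeff (2 * n) f) ∧
      (∀ n : ℕ, coeff (2 * n) f ≠ 0) := by
  have hf : f = expand 2 two_ne_zero (binomialSeries ℚ (2⁻¹ : ℚ)) :=
    eq_of_sq_eq_sq_of_constantCoeff_eq_one h0 (by simp) (by
      rw [h2, ← map_pow, binomialSeries_half_sq]; simp)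
  have hcoeff (n : ℕ) : coeff (2 * n) f = Ring.choose (2⁻¹ : ℚ) n := by simp [hf]
  have hsign (n : ℕ) (hn : 1 ≤ n) : 0 < (-1 : ℚ) ^ (n + 1) * coeff (2 * n) f :=
    hcoeff n ▸ Ring.neg_one_pow_succ_mul_choose_pos (by norm_num) (by norm_num) hn
  refine ⟨fun m hm => ?_, hsign, fun n => ?_⟩
  · rw [hf, coeff_expand_of_not_dvd]
    exact Nat.not_even_iff_odd.mpr hm ∘ even_iff_two_dvd.mpr
  · rcases Nat.eq_zero_or_pos n with rfl | hn
    · simp [h0]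
    · exact right_ne_zero_of_mul (hsign n hn).ne'
end

section
/- Let f ∈ ℚ⟦X⟧ satisfy constantCoeff f = 1 and f² = 1 + X². Then for every n ∈ ℕ the denominator of the rational number coeff n f (in lowest terms) is a power of 2, i.e. there exists k ∈ ℕ with (coeff n f).den = 2^k. -/
/-!
Comparing the coefficients of `X ^ n` in `f ^ 2 = 1 + X ^ 2` gives, for `n > 0`,
`2 * f_n = [n = 2] - ∑_{0 < i < n} f_i f_{n-i}`. So each coefficient is obtained from earlier
ones by ring operations and one division by `2`, and therefore lies in any subring that
contains `1/2`, such as the rationals whose denominator is a power of `2`.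
-/

open PowerSeries

namespace Rat

/-- `ℤ[1/p]` inside `ℚ`. -/
def powDenSubring (p : ℕ) (hp : p.Prime) : Subring ℚ where
  carrier := {q | ∃ k : ℕ, q.den = p ^ k}
  zero_mem' := ⟨0, rfl⟩
  one_mem' := ⟨0, rfl⟩
  neg_mem' := fun ⟨k, hk⟩ => ⟨k, by rw [den_neg_eq_den, hk]⟩
  add_mem' := fun {q r} ⟨a, ha⟩ ⟨b, hb⟩ =>
    ((Nat.dvd_prime_pow hp).mp (pow_add p a b ▸ ha ▸ hb ▸ add_den_dvd q r)).imp
      fun _ hk => hk.2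
  mul_mem' := fun {q r} ⟨a, ha⟩ ⟨b, hb⟩ =>
    ((Nat.dvd_prime_pow hp).mp (pow_add p a b ▸ ha ▸ hb ▸ mul_den_dvd q r)).imp
      fun _ hk => hk.2

theorem mem_powDenSubring {p : ℕ} {hp : p.Prime} {q : ℚ} :
    q ∈ powDenSubring p hp ↔ ∃ k : ℕ, q.den = p ^ k :=
  Iff.rfl

theorem inv_natCast_mem_powDenSubring {p : ℕ} (hp : p.Prime) :
    (p : ℚ)⁻¹ ∈ powDenSubring p hp :=
  ⟨1, by rw [pow_one, inv_natCast_den, if_neg (by exact_mod_cast hp.ne_zero)]⟩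

end Rat

namespace PowerSeries

variable {A : Type*} [CommRing A]

theorem coeff_sq_of_pos (f : A⟦X⟧) {n : ℕ} (hn : 0 < n) :
    coeff n (f ^ 2) = 2 * constantCoeff f * coeff n f
      + ∑ i ∈ Finset.Ico 1 n, coeff i f * coeff (n - i) f := by
  rw [sq, coeff_mul, Finset.Nat.sum_antidiagonal_eq_sum_range_succ_mk, Finset.sum_range_succ,
    Finset.range_eq_Ico, Finset.sum_eq_sum_Ico_succ_bot hn, Nat.sub_zero, Nat.sub_self,
    coeff_zero_eq_constantCoeff]
  ring

theorem coeff_mem_of_sq_coeff_mem [Invertible (2 : A)] (S : Subring A) (h2 : ⅟2 ∈ S)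
    {f : A⟦X⟧} (h0 : constantCoeff f = 1) (hsq : ∀ n, coeff n (f ^ 2) ∈ S) (n : ℕ) :
    coeff n f ∈ S := by
  induction n using Nat.strong_induction_on with
  | _ n ih =>
    rcases Nat.eq_zero_or_pos n with rfl | hn
    · rw [coeff_zero_eq_constantCoeff_apply, h0]
      exact S.one_mem
    have hrec : coeff n f =
        ⅟2 * (coeff n (f ^ 2) - ∑ i ∈ Finset.Ico 1 n, coeff i f * coeff (n - i) f) := by
      rw [coeff_sq_of_pos f hn, h0, mul_one, add_sub_cancel_right, ← mul_assoc,
        invOf_mul_self, one_mul]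
    rw [hrec]
    refine S.mul_mem h2 (S.sub_mem (hsq n) (S.sum_mem fun i hi => ?_))
    rw [Finset.mem_Ico] at hi
    exact S.mul_mem (ih i (by omega)) (ih (n - i) (by omega))

end PowerSeries

/-- If `f ∈ ℚ⟦X⟧` satisfies `constantCoeff f = 1` and `f² = 1 + X²`
(the Taylor series of `√(1+u²)`), then the denominator (in lowest terms) of every
coefficient of `f` is a power of `2`. -/
theorem sqrt_one_add_sq_den_pow_two (f : PowerSeries ℚ)
    (h0 : constantCoeff f = 1) (h2 : f ^ 2 = 1 + X ^ 2) :
    ∀ n : ℕ, ∃ k : ℕ, (coeff n f).den = 2 ^ k := by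
  let S := Rat.powDenSubring 2 Nat.prime_two
  have half_mem : ⅟(2 : ℚ) ∈ S := by
    simpa [invOf_eq_inv] using Rat.inv_natCast_mem_powDenSubring Nat.prime_two
  have hsq : ∀ n, coeff n (f ^ 2) ∈ S := fun n => by
    rw [h2, map_add, coeff_one, coeff_X_pow]
    exact S.add_mem (by split_ifs <;> simp) (by split_ifs <;> simp)
  exact fun n => Rat.mem_powDenSubring.mp (coeff_mem_of_sq_coeff_mem S half_mem h0 hsq n)
end

section
/- Let G ∈ ℚ⟦X⟧ satisfy constantCoeff G = 1 and G² · (1 + X²) = 1. Then for every q ∈ ℕ, coeff q G ≠ 0 if and only if q is even. -/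
open PowerSeries

/-!
Differentiating `G² (1 + X²) = 1` and cancelling the factor `2G` (whose constant term `2 a_0`
is nonzero) gives `(1 + X²) G' = -X G`, i.e. `(m + 2) a_{m+2} = -(m + 1) a_m` for the
coefficients `a_m` of `G`. In characteristic zero this recurrence propagates vanishing both ways
between `a_m` and `a_{m+2}`, and `a_0 ≠ 0` (as `a_0² = 1`), `a_1 = 0` (the constant term of the
differential equation) settle the two parities.
-/

theorem PowerSeries.coeff_X_mul_derivative {R : Type*} [CommRing R] (f : R⟦X⟧) (n : ℕ) :
    coeff n (X * d⁄dX R f) = n * coeff n f := by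
  cases n with
  | zero => simp
  | succ n => rw [coeff_succ_X_mul, coeff_derivative, mul_comm, Nat.cast_succ]

theorem ne_zero_iff_even_of_add_two {M : Type*} [Zero M] {a : ℕ → M}
    (h0 : a 0 ≠ 0) (h1 : a 1 = 0) (h : ∀ m, a (m + 2) = 0 ↔ a m = 0) (q : ℕ) :
    a q ≠ 0 ↔ Even q := by
  induction q using Nat.twoStepInduction with
  | zero => simpa using h0
  | one => simpa using h1
  | more n ihn _ => rw [Ne, h, ← Ne, ihn]; simp [Nat.even_add]

section

variable {R : Type*} [CommRing R] {G : R⟦X⟧}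

theorem coeff_zero_ne_zero_of_sq_mul_one_add_X_sq [Nontrivial R]
    (hG : G ^ 2 * (1 + X ^ 2) = 1) : coeff 0 G ≠ 0 := by
  intro h0
  rw [coeff_zero_eq_constantCoeff_apply] at h0
  simpa [h0] using congrArg constantCoeff hG

variable [IsDomain R] [CharZero R]

theorem derivative_mul_one_add_X_sq_add_X_mul (hG : G ^ 2 * (1 + X ^ 2) = 1) :
    d⁄dX R G * (1 + X ^ 2) + X * G = 0 := by
  have h2G : 2 * G ≠ 0 := fun h ↦ coeff_zero_ne_zero_of_sq_mul_one_add_X_sq hG <| by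
    simpa [map_ofNat] using congrArg (coeff 0) h
  have hdiff : (2 * G) * (d⁄dX R G * (1 + X ^ 2) + X * G) = 0 := by
    have := congrArg (d⁄dX R) hG
    simp only [Derivation.leibniz, Derivation.leibniz_pow, map_add, derivative_X,
      smul_eq_mul, derivative_one] at this
    linear_combination this
  exact (mul_eq_zero.mp hdiff).resolve_left h2G

theorem coeff_one_eq_zero_of_sq_mul_one_add_X_sq (hG : G ^ 2 * (1 + X ^ 2) = 1) :
    coeff 1 G = 0 := by
  have := congrArg (coeff 0) (derivative_mul_one_add_X_sq_add_X_mul hG)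
  rw [mul_add, mul_one, map_add, map_add, coeff_derivative] at this
  simpa using this

theorem coeff_add_two_of_sq_mul_one_add_X_sq (hG : G ^ 2 * (1 + X ^ 2) = 1) (m : ℕ) :
    ((m : R) + 2) * coeff (m + 2) G = -((m + 1) * coeff m G) := by
  have := congrArg (coeff (m + 1)) (derivative_mul_one_add_X_sq_add_X_mul hG)
  rw [show d⁄dX R G * (1 + X ^ 2) + X * G = d⁄dX R G + X * (X * d⁄dX R G) + X * G by ring,
    map_add, map_add, coeff_derivative, coeff_succ_X_mul, coeff_succ_X_mul,
    coeff_X_mul_derivative, map_zero] at this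
  push_cast at this
  linear_combination this

theorem coeff_add_two_eq_zero_iff_of_sq_mul_one_add_X_sq (hG : G ^ 2 * (1 + X ^ 2) = 1)
    (m : ℕ) : coeff (m + 2) G = 0 ↔ coeff m G = 0 := by
  have hm1 : (m : R) + 1 ≠ 0 := by exact_mod_cast m.succ_ne_zero
  have hm2 : (m : R) + 2 ≠ 0 := by exact_mod_cast (m + 1).succ_ne_zero
  rw [← mul_eq_zero_iff_left hm2, coeff_add_two_of_sq_mul_one_add_X_sq hG, neg_eq_zero,
    mul_eq_zero_iff_left hm1]

end

theorem inv_sqrt_coeff_ne_zero_iff_even_general (G : PowerSeries ℚ)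
    (hG : G ^ 2 * (1 + X ^ 2) = 1) :
    ∀ q : ℕ, coeff q G ≠ 0 ↔ Even q :=
  ne_zero_iff_even_of_add_two (coeff_zero_ne_zero_of_sq_mul_one_add_X_sq hG)
    (coeff_one_eq_zero_of_sq_mul_one_add_X_sq hG)
    (coeff_add_two_eq_zero_iff_of_sq_mul_one_add_X_sq hG)

/-- If `G ∈ ℚ⟦X⟧` is the Taylor series of `1/√(1+u²)`
(`constantCoeff G = 1`, `G² (1 + X²) = 1`), then `coeff q G ≠ 0` iff `q` is even. -/
theorem inv_sqrt_coeff_ne_zero_iff_even (G : PowerSeries ℚ)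
    (hG0 : constantCoeff G = 1) (hG : G ^ 2 * (1 + X ^ 2) = 1) :
    ∀ q : ℕ, coeff q G ≠ 0 ↔ Even q :=
  inv_sqrt_coeff_ne_zero_iff_even_general G hG
end

section
/- Let S ∈ ℚ⟦X⟧ be the power series with coeff n S = 1/(n+1)! for n even and coeff n S = 0 for n odd, and let G ∈ ℚ⟦X⟧ satisfy constantCoeff G = 1 and G² · (1 + X²) = 1. Then for every q ∈ ℕ, coeff q ( ((rescale (1/2) S)⁻¹)^{q+1} ) = (1/2)^q · coeff q G. -/
/-!
Put `Q = rescale (1/2) S` and `f = X * Q`, the series of `2 sinh(u/2)`, so that `f'' = f/4`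
and hence `f'² = 1 + f²/4`. For `P = Q⁻¹ = X/f`, `coeff n (P ^ (n + 1))` is the residue of
`f^{-(n+1)}`. Residues of derivatives vanish (`X * F'` has `n`-th coefficient `n * coeff n F`),
so integrating `P ^ (n + 3) * f'²` by parts and using both differential equations gives
`(n + 2) aₙ₊₂ = -(n + 1) aₙ / 4` with `a₁ = 0`. This is also the recurrence of the coefficients
of `1/√(1 + u²/4) = rescale (1/2) G`, read off from `(1 + u²/4) G' = -(u/4) G`, and both
sequences start with `1`. (In other words, this is Lagrange inversion for the compositional
inverse `2 arsinh(w/2)` of `f`.)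
-/

open PowerSeries

namespace PowerSeries

theorem coeff_X_mul_derivative_s7 {R : Type*} [CommSemiring R] (F : R⟦X⟧) (n : ℕ) :
    coeff n (X * d⁄dX R F) = n * coeff n F := by
  cases n with
  | zero => simp
  | succ n => rw [coeff_succ_X_mul, coeff_derivative, mul_comm]; push_cast; rfl

section CommRing

variable {R : Type*} [CommRing R] {Q P : R⟦X⟧}

theorem X_mul_derivative_of_mul_eq_one (hQP : Q * P = 1) :
    X * d⁄dX R P = P - P ^ 2 * d⁄dX R (X * Q) := by
  have hD : Q * d⁄dX R P + P * d⁄dX R Q = 0 := by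
    simpa [Derivation.leibniz] using congrArg (d⁄dX R) hQP
  rw [Derivation.leibniz, derivative_X, smul_eq_mul, smul_eq_mul]
  linear_combination (X * P) * hD + (P - X * d⁄dX R P) * hQP

theorem X_mul_derivative_pow_of_mul_eq_one (hQP : Q * P = 1) (m : ℕ) :
    X * d⁄dX R (P ^ m) = (m : R⟦X⟧) * (P ^ m - P ^ (m + 1) * d⁄dX R (X * Q)) := by
  cases m with
  | zero => simp
  | succ m =>
    rw [derivative_pow, Nat.add_sub_cancel]
    linear_combination ((m + 1 : ℕ) * P ^ m) * X_mul_derivative_of_mul_eq_one hQP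

/-- Integration by parts for residues: with `f = X * Q` and `P = X / f`, the two sides are the
residues of `f^{-(m+1)} f' H` and `f^{-m} H' / m`. -/
theorem natCast_mul_coeff_pow_succ_mul_derivative (hQP : Q * P = 1) (m : ℕ) (H : R⟦X⟧) :
    m * coeff m (P ^ (m + 1) * d⁄dX R (X * Q) * H) = coeff m (X * P ^ m * d⁄dX R H) := by
  have h := coeff_X_mul_derivative_s7 (P ^ m * H) m
  have e : X * d⁄dX R (P ^ m * H) = X * P ^ m * d⁄dX R H
      + (m : R⟦X⟧) * (P ^ m * H) - (m : R⟦X⟧) * (P ^ (m + 1) * d⁄dX R (X * Q) * H) := by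
    rw [Derivation.leibniz, smul_eq_mul, smul_eq_mul]
    linear_combination H * X_mul_derivative_pow_of_mul_eq_one hQP m
  rw [e, map_sub, map_add, ← map_natCast (C (R := R)), coeff_C_mul, coeff_C_mul] at h
  linear_combination -h

def InvSqrtRecurrence (c : R) (a : ℕ → R) : Prop :=
  a 1 = 0 ∧ ∀ n : ℕ, (n + 2) * a (n + 2) = -((n + 1) * c * a n)

end CommRing

section TorsionFree

variable {R : Type*} [CommRing R] [IsAddTorsionFree R]

theorem sq_derivative_sub_C_mul_sq {f : R⟦X⟧} {c : R} (hf : d⁄dX R (d⁄dX R f) = C c * f) :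
    d⁄dX R f ^ 2 - C c * f ^ 2 = C (constantCoeff (d⁄dX R f) ^ 2 - c * constantCoeff f ^ 2) := by
  refine derivative.ext ?_ (by simp)
  simp only [map_sub, derivative_pow, Derivation.leibniz, hf, derivative_C, smul_eq_mul]
  ring

variable {Q P : R⟦X⟧} {c : R}

theorem succ_mul_coeff_succ_pow_add_two (hQP : Q * P = 1) (hQ0 : constantCoeff Q = 1)
    (hf : d⁄dX R (d⁄dX R (X * Q)) = C c * (X * Q)) (m : ℕ) :
    (m + 1) * coeff (m + 1) (P ^ (m + 2)) = -(m * c * coeff m (X * P ^ m)) := by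
  have hsq : d⁄dX R (X * Q) ^ 2 = 1 + C c * (X * Q) ^ 2 := by
    have h0 : constantCoeff (d⁄dX R (X * Q)) = 1 := by simp [Derivation.leibniz, hQ0]
    have := sq_derivative_sub_C_mul_sq hf
    rw [h0, show constantCoeff (X * Q) = 0 by simp, zero_pow two_ne_zero, mul_zero, sub_zero,
      one_pow, map_one] at this
    linear_combination this
  have h := natCast_mul_coeff_pow_succ_mul_derivative hQP (m + 1) (d⁄dX R (X * Q))
  have e1 : P ^ (m + 1 + 1) * d⁄dX R (X * Q) * d⁄dX R (X * Q)
      = P ^ (m + 2) + C c * X * (X * P ^ m) := by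
    linear_combination P ^ (m + 2) * hsq + C c * X ^ 2 * P ^ m * (Q * P + 1) * hQP
  have e2 : X * P ^ (m + 1) * d⁄dX R (d⁄dX R (X * Q)) = C c * X * (X * P ^ m) := by
    rw [hf]; linear_combination C c * X ^ 2 * P ^ m * hQP
  rw [e1, e2, map_add, mul_assoc, coeff_C_mul, coeff_succ_X_mul] at h
  push_cast at h
  linear_combination h

theorem invSqrtRecurrence_coeff_pow_succ (hQP : Q * P = 1) (hQ0 : constantCoeff Q = 1)
    (hf : d⁄dX R (d⁄dX R (X * Q)) = C c * (X * Q)) :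
    InvSqrtRecurrence c fun n ↦ coeff n (P ^ (n + 1)) := by
  refine ⟨by simpa using succ_mul_coeff_succ_pow_add_two hQP hQ0 hf 0, fun n ↦ ?_⟩
  have h := succ_mul_coeff_succ_pow_add_two hQP hQ0 hf (n + 1)
  rw [coeff_succ_X_mul] at h
  push_cast at h
  linear_combination h

end TorsionFree

section Field

variable {K : Type*} [Field K] [CharZero K]

theorem InvSqrtRecurrence.eq {c : K} {a b : ℕ → K} (ha : InvSqrtRecurrence c a)
    (hb : InvSqrtRecurrence c b) (h0 : a 0 = b 0) (n : ℕ) : a n = b n := by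
  induction n using Nat.twoStepInduction with
  | zero => exact h0
  | one => rw [ha.1, hb.1]
  | more n ih _ =>
    have hn : (n + 2 : K) ≠ 0 := by exact_mod_cast (n + 1).succ_ne_zero
    apply mul_left_cancel₀ hn
    rw [ha.2, hb.2, ih]

theorem derivative_mul_one_add_C_mul_X_sq {G : K⟦X⟧} {c : K}
    (hG : G ^ 2 * (1 + C c * X ^ 2) = 1) :
    d⁄dX K G * (1 + C c * X ^ 2) = -(C c * X * G) := by
  have hD : 2 * G * (d⁄dX K G * (1 + C c * X ^ 2) + C c * X * G) = 0 := by
    have := congrArg (d⁄dX K) hG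
    simp only [Derivation.leibniz, derivative_pow, smul_eq_mul, map_add, derivative_C,
      derivative_X, Derivation.map_one_eq_zero] at this
    linear_combination this
  have h2 : C (2⁻¹ : K) * 2 = 1 := by
    rw [← map_ofNat C 2, ← map_mul, inv_mul_cancel₀ two_ne_zero, map_one]
  linear_combination (C (2⁻¹ : K) * G * (1 + C c * X ^ 2)) * hD
    - (d⁄dX K G * (1 + C c * X ^ 2) + C c * X * G) * (hG + G ^ 2 * (1 + C c * X ^ 2) * h2)

theorem invSqrtRecurrence_coeff {G : K⟦X⟧} {c : K} (hG : G ^ 2 * (1 + C c * X ^ 2) = 1) :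
    InvSqrtRecurrence c fun n ↦ coeff n G := by
  have hODE : d⁄dX K G = -(C c * (X * d⁄dX K (X * G))) := by
    rw [Derivation.leibniz, derivative_X, smul_eq_mul, smul_eq_mul]
    linear_combination derivative_mul_one_add_C_mul_X_sq hG
  have h (m : ℕ) : (m + 1) * coeff (m + 1) G = -(c * (m * coeff m (X * G))) := by
    have := congrArg (coeff m) hODE
    rw [coeff_derivative, map_neg, coeff_C_mul, coeff_X_mul_derivative_s7] at this
    linear_combination this
  refine ⟨by simpa using h 0, fun n ↦ ?_⟩
  have := h (n + 1)
  rw [coeff_succ_X_mul] at this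
  push_cast at this
  linear_combination this

theorem coeff_add_two_mul_of_sinhDiv {S : K⟦X⟧}
    (hS : ∀ n : ℕ, coeff n S = if Even n then ((n + 1).factorial : K)⁻¹ else 0) (m : ℕ) :
    coeff (m + 2) S * ((m + 2) * (m + 3)) = coeff m S := by
  simp only [hS, Nat.even_add, even_two, iff_true]
  split_ifs
  · have h2 : (m + 2 : K) ≠ 0 := by exact_mod_cast (m + 1).succ_ne_zero
    have h3 : (m + 3 : K) ≠ 0 := by exact_mod_cast (m + 2).succ_ne_zero
    have hf : ((m + 1).factorial : K) ≠ 0 := by exact_mod_cast (m + 1).factorial_ne_zero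
    rw [Nat.factorial_succ (m + 2), Nat.factorial_succ (m + 1)]
    push_cast
    rw [show (m : K) + 2 + 1 = m + 3 by ring, show (m : K) + 1 + 1 = m + 2 by ring]
    field_simp
  · ring

theorem derivative_derivative_X_mul_rescale_of_sinhDiv {S : K⟦X⟧}
    (hS : ∀ n : ℕ, coeff n S = if Even n then ((n + 1).factorial : K)⁻¹ else 0) (a : K) :
    d⁄dX K (d⁄dX K (X * rescale a S)) = C (a ^ 2) * (X * rescale a S) := by
  ext n
  rw [coeff_derivative, coeff_derivative, coeff_C_mul]
  cases n with
  | zero => simp [coeff_rescale, hS 1]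
  | succ m =>
    simp only [coeff_succ_X_mul, coeff_rescale]
    push_cast
    linear_combination a ^ (m + 2) * coeff_add_two_mul_of_sinhDiv hS m

end Field

end PowerSeries

/-- Let `S ∈ ℚ⟦X⟧` be the Taylor series of `sinh(u)/u`
(`coeff n S = 1/(n+1)!` for even `n`, `0` for odd `n`) and `G ∈ ℚ⟦X⟧` the Taylor
series of `1/√(1+u²)`. Then for every `q`,
`coeff q (((rescale (1/2) S)⁻¹)^(q+1)) = (1/2)^q * coeff q G`. -/
theorem coeff_pow_inv_rescale_sinh_div (S G : PowerSeries ℚ)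
    (hS : ∀ n : ℕ, coeff n S =
      if Even n then ((Nat.factorial (n + 1) : ℚ))⁻¹ else 0)
    (hG0 : constantCoeff G = 1) (hG : G ^ 2 * (1 + X ^ 2) = 1) :
    ∀ q : ℕ,
      coeff q (((rescale (1 / 2 : ℚ) S)⁻¹) ^ (q + 1))
        = (1 / 2 : ℚ) ^ q * coeff q G := by
  intro q
  set Q := rescale (1 / 2 : ℚ) S
  have hQ0 : constantCoeff Q = 1 := by simp [Q, ← coeff_zero_eq_constantCoeff_apply, hS]
  have hQP : Q * Q⁻¹ = 1 := PowerSeries.mul_inv_cancel Q (by simp [hQ0])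
  have hG' : rescale (1 / 2 : ℚ) G ^ 2 * (1 + C ((1 / 2) ^ 2) * X ^ 2) = 1 := by
    have := congrArg (rescale (1 / 2 : ℚ)) hG
    simp only [map_mul, map_pow, map_add, map_one, rescale_X] at this
    rw [map_pow]
    linear_combination this
  rw [← coeff_rescale]
  refine (invSqrtRecurrence_coeff_pow_succ hQP hQ0
    (derivative_derivative_X_mul_rescale_of_sinhDiv hS _)).eq (invSqrtRecurrence_coeff hG') ?_ q
  simp [hQ0, hG0]
end

section
/- Let z ∈ ℂ with ‖z‖ < 1 and let n ≥ 1. Then the n-th iterated derivative at 0 of the function x ↦ (1 − z·exp(−x))⁻¹ from ℂ to ℂ equals (−1)^n · ∑_{k=0}^{∞} k^n z^k; that is, iteratedDeriv n (fun x => (1 − z * exp(−x))⁻¹) 0 = (−1)^n * ∑' (k : ℕ), (k : ℂ)^n * z^k. -/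
/-!
Expanding geometrically, `(1 - z e^{-x})⁻¹ = ∑ z^k e^{-kx}` near `0`. Fix `‖z‖ < c < 1`: on the
half-plane `Re x > log c` the `m`-th termwise derivatives `(-k)^m z^k e^{-kx}` are dominated by
the summable `k^m (‖z‖/c)^k`, so the series may be differentiated termwise, each derivative
bringing down a factor `-k`.
-/

open Complex Filter Topology

section CexpNegSeries

variable {a : ℕ → ℂ} {s : ℝ}

lemma norm_cexp_neg_natCast_mul_le {x : ℂ} (hx : s < x.re) (k : ℕ) :
    ‖cexp (-k * x)‖ ≤ Real.exp (-k * s) := by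
  rw [Complex.norm_exp, Real.exp_le_exp]
  simpa using mul_le_mul_of_nonneg_left hx.le (Nat.cast_nonneg k)

variable (ha : ∀ m : ℕ, Summable fun k : ℕ => (k : ℝ) ^ m * ‖a k‖ * Real.exp (-k * s))
include ha

lemma hasDerivAt_tsum_mul_cexp_neg_mul (m : ℕ) {x : ℂ} (hx : s < x.re) :
    HasDerivAt (fun y => ∑' k : ℕ, (-k : ℂ) ^ m * a k * cexp (-k * y))
      (∑' k : ℕ, (-k : ℂ) ^ (m + 1) * a k * cexp (-k * x)) x := by
  have hbound (j : ℕ) {y : ℂ} (hy : s < y.re) (k : ℕ) :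
      ‖(-k : ℂ) ^ j * a k * cexp (-k * y)‖ ≤ (k : ℝ) ^ j * ‖a k‖ * Real.exp (-k * s) := by
    simp only [norm_mul, norm_pow, norm_neg, Complex.norm_natCast]
    gcongr
    exact norm_cexp_neg_natCast_mul_le hy k
  have hterm (k : ℕ) (y : ℂ) : HasDerivAt (fun y => (-k : ℂ) ^ m * a k * cexp (-k * y))
      ((-k : ℂ) ^ (m + 1) * a k * cexp (-k * y)) y := by
    refine (((hasDerivAt_id' y).const_mul (-k : ℂ)).cexp.const_mul
      ((-k : ℂ) ^ m * a k)).congr_deriv ?_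
    ring
  exact hasDerivAt_tsum_of_isPreconnected (ha (m + 1)) (isOpen_lt continuous_const continuous_re)
    (convex_halfSpace_re_gt s).isPreconnected (fun k y _ => hterm k y)
    (fun k y hy => hbound (m + 1) hy k) hx (.of_norm_bounded (ha m) (hbound m hx)) hx

lemma iteratedDeriv_tsum_mul_cexp_neg_mul (m : ℕ) {x : ℂ} (hx : s < x.re) :
    iteratedDeriv m (fun y => ∑' k : ℕ, a k * cexp (-k * y)) x
      = ∑' k : ℕ, (-k : ℂ) ^ m * a k * cexp (-k * x) := by
  induction m generalizing x with
  | zero => simp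
  | succ m ih =>
    have hnhds : {y : ℂ | s < y.re} ∈ 𝓝 x :=
      (isOpen_lt continuous_const continuous_re).mem_nhds hx
    rw [iteratedDeriv_succ, (eventuallyEq_of_mem hnhds fun y hy => ih hy).deriv_eq]
    exact (hasDerivAt_tsum_mul_cexp_neg_mul ha m hx).deriv

end CexpNegSeries

lemma one_sub_mul_cexp_neg_inv_eq_tsum {z x : ℂ} (h : ‖z * cexp (-x)‖ < 1) :
    (1 - z * cexp (-x))⁻¹ = ∑' k : ℕ, z ^ k * cexp (-k * x) := by
  rw [← tsum_geometric_of_norm_lt_one h]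
  congr 1 with k
  rw [mul_pow, ← Complex.exp_nat_mul]
  ring_nf

lemma summable_pow_mul_norm_pow_mul_exp_neg_mul_log {z : ℂ} {c : ℝ} (hzc : ‖z‖ < c) (m : ℕ) :
    Summable fun k : ℕ => (k : ℝ) ^ m * ‖z ^ k‖ * Real.exp (-k * Real.log c) := by
  have hc : 0 < c := (norm_nonneg z).trans_lt hzc
  refine (summable_pow_mul_geometric_of_norm_lt_one m (show ‖‖z‖ / c‖ < 1 by
    rwa [Real.norm_of_nonneg (by positivity), div_lt_one hc])).congr fun k => ?_
  rw [norm_pow, neg_mul, ← mul_neg, Real.exp_nat_mul, Real.exp_neg, Real.exp_log hc, div_pow]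
  ring

theorem iteratedDeriv_one_sub_mul_exp_neg_general (z : ℂ) (hz : ‖z‖ < 1) (n : ℕ) :
    iteratedDeriv n (fun x : ℂ => (1 - z * Complex.exp (-x))⁻¹) 0
      = (-1 : ℂ) ^ n * ∑' k : ℕ, (k : ℂ) ^ n * z ^ k := by
  obtain ⟨c, hzc, hc1⟩ := exists_between hz
  have hlog : Real.log c < (0 : ℂ).re :=
    Real.log_neg ((norm_nonneg z).trans_lt hzc) hc1
  have hF : (fun x : ℂ => (1 - z * cexp (-x))⁻¹) =ᶠ[𝓝 0]
      fun x => ∑' k : ℕ, z ^ k * cexp (-k * x) := by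
    have hcont : ContinuousAt (fun x : ℂ => ‖z * cexp (-x)‖) 0 := by fun_prop
    filter_upwards [hcont.eventually_lt continuousAt_const (by simpa using hz)] with x hx
    exact one_sub_mul_cexp_neg_inv_eq_tsum hx
  rw [hF.iteratedDeriv_eq, iteratedDeriv_tsum_mul_cexp_neg_mul
    (summable_pow_mul_norm_pow_mul_exp_neg_mul_log hzc) n hlog, ← tsum_mul_left]
  congr 1 with k
  rw [mul_zero, Complex.exp_zero, mul_one, neg_pow]
  ring

/-- For `‖z‖ < 1` and `n ≥ 1`, the `n`-th iterated derivative at `0`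
of `x ↦ (1 - z·exp(-x))⁻¹` equals `(-1)^n ∑_{k≥0} k^n z^k`. -/
theorem iteratedDeriv_one_sub_mul_exp_neg (z : ℂ) (hz : ‖z‖ < 1) (n : ℕ) (hn : 1 ≤ n) :
    iteratedDeriv n (fun x : ℂ => (1 - z * Complex.exp (-x))⁻¹) 0
      = (-1 : ℂ) ^ n * ∑' k : ℕ, (k : ℂ) ^ n * z ^ k :=
  iteratedDeriv_one_sub_mul_exp_neg_general z hz n
end

section
/- Let f be a rational function over ℂ (an element of RatFunc ℂ, with coprime numerator f.num and denominator f.denom). Assume: (i) every complex root of f.denom is a root of unity, i.e. for every z ∈ ℂ with f.denom.eval z = 0 there is m ≥ 1 with z^m = 1; (ii) the degree of f.num is at most the degree of f.denom; (iii) there is a constant M such that for every z ∈ ℂ with ‖z‖ = 1 and f.denom.eval z ≠ 0 one has ‖f.num.eval z / f.denom.eval z‖ ≤ M; (iv) f.num.eval 0 = 0. Then f = 0. -/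
/-!
A pole `z` of `f` would be a root of unity, hence on the unit circle. The zeros of the
denominator are finite, so the circle minus them is dense in the circle, and by continuity the
bound `‖num‖ ≤ M ‖denom‖` holds on the whole circle; at `z` it forces `num z = 0`, contradicting
coprimality. So the denominator has no roots and is constant over `ℂ`; then `num` is constant
too, and it vanishes at `0`.
-/

open Polynomial

instance : Nontrivial Circle :=
  ⟨⟨-1, 1, Circle.neg_ne_self 1⟩⟩

theorem Polynomial.norm_eval_le_mul_norm_eval_of_bound_on_circle {p q : ℂ[X]} (hq : q ≠ 0)
    {M : ℝ} (h : ∀ z : ℂ, ‖z‖ = 1 → q.eval z ≠ 0 → ‖p.eval z / q.eval z‖ ≤ M)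
    {z : ℂ} (hz : ‖z‖ = 1) : ‖p.eval z‖ ≤ M * ‖q.eval z‖ := by
  set S : Set Circle := {u | q.eval (u : ℂ) ≠ 0}
  have hS : Dense S := by
    have hfin : {u : Circle | q.eval (u : ℂ) = 0}.Finite :=
      (finite_setOfPred_isRoot hq).preimage Circle.coe_injective.injOn
    simpa [S, Set.sdiff_eq, Set.compl_ofPred] using dense_univ.sdiff_finite hfin
  have hclosed : IsClosed {u : Circle | ‖p.eval (u : ℂ)‖ ≤ M * ‖q.eval (u : ℂ)‖} :=
    isClosed_le (by fun_prop) (by fun_prop)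
  have hsub : S ⊆ {u : Circle | ‖p.eval (u : ℂ)‖ ≤ M * ‖q.eval (u : ℂ)‖} := fun u hu => by
    have := h u u.norm_coe hu
    rwa [norm_div, div_le_iff₀ (norm_pos_iff.mpr hu)] at this
  have hle := hS.closure_eq ▸ hclosed.closure_subset_iff.mpr hsub
  exact hle (Set.mem_univ (⟨z, mem_sphere_zero_iff_norm.2 hz⟩ : Circle))

/-- (Liouville-type rigidity lemma.) A rational function `f` over `ℂ`
whose denominator has all its roots at roots of unity, with `deg num ≤ deg denom`
(no pole at infinity), which is bounded on the unit circle (away from poles), and whose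
numerator vanishes at `0`, is identically zero. -/
theorem ratFunc_poles_rootsOfUnity_bounded_eq_zero (f : RatFunc ℂ)
    (h1 : ∀ z : ℂ, Polynomial.eval z f.denom = 0 → ∃ m : ℕ, 1 ≤ m ∧ z ^ m = 1)
    (h2 : f.num.degree ≤ f.denom.degree)
    (h3 : ∃ M : ℝ, ∀ z : ℂ, ‖z‖ = 1 → Polynomial.eval z f.denom ≠ 0 →
      ‖Polynomial.eval z f.num / Polynomial.eval z f.denom‖ ≤ M)
    (h4 : Polynomial.eval 0 f.num = 0) :
    f = 0 := by
  obtain ⟨M, hM⟩ := h3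
  have hdenom : f.denom.degree = 0 := by
    by_contra hdeg
    obtain ⟨z, hz⟩ := IsAlgClosed.exists_root f.denom hdeg
    obtain ⟨m, hm, hzm⟩ := h1 z hz
    have hnorm : ‖z‖ = 1 := Complex.norm_eq_one_of_pow_eq_one hzm (by omega)
    have hnum := norm_eval_le_mul_norm_eval_of_bound_on_circle f.denom_ne_zero hM hnorm
    rw [hz, norm_zero, mul_zero, norm_le_zero_iff] at hnum
    have hcop := aeval_ne_zero_of_isCoprime f.isCoprime_num_denom z
    simp only [coe_aeval_eq_eval] at hcop
    exact hcop.elim (· hnum) (· hz)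
  have hnum : f.num = 0 := by
    rw [eq_C_of_degree_le_zero (h2.trans_eq hdenom), coeff_zero_eq_eval_zero, h4, map_zero]
  exact RatFunc.num_eq_zero_iff.mp hnum
end

section
/- Let G be a group, A a unital associative ℂ-algebra, and let G act on A by ℂ-algebra automorphisms (written g·a). Let n ≥ 1 and let f : A^{n+1} → (G → ℂ) be an equivariant n-cochain. Then B₀(b_H f) + b'(B₀ f) = f + (−1)^{n+1} λ_H f, as functions A^{n+1} → (G → ℂ). -/
/-- An `n`-cochain on a `G`-algebra `A`: a function of `n+1` algebra arguments with
values in functions on the group `G`. -/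
def Cochain (G A : Type*) (n : ℕ) : Type _ :=
  (Fin (n + 1) → A) → G → ℂ

section

variable {G A : Type*} [Group G] [Ring A] [Algebra ℂ A] [MulSemiringAction G A]

/-- `f` is equivariant: `f (g·a⁰, …, g·aⁿ | g h g⁻¹) = f (a⁰, …, aⁿ | h)`. -/
def IsEquivariantCochain {n : ℕ} (f : Cochain G A n) : Prop :=
  ∀ (g h : G) (a : Fin (n + 1) → A),
    f (fun i => g • a i) (g * h * g⁻¹) = f a h

/-- The equivariant cyclic permutation:
`(λ_H f)(a⁰, …, aⁿ | h) = f (h⁻¹·aⁿ, a⁰, …, aⁿ⁻¹ | h)`. -/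
def lamH {n : ℕ} (f : Cochain G A n) : Cochain G A n :=
  fun a h => f (Fin.cons (h⁻¹ • a (Fin.last n)) (Fin.init a)) h

/-- The operator `b'`:
`(b' f)(a⁰, …, aⁿ⁺¹ | h) = ∑_{j=0}^n (-1)^j f (a⁰, …, aʲaʲ⁺¹, …, aⁿ⁺¹ | h)`. -/
noncomputable def bPrime {n : ℕ} (f : Cochain G A n) : Cochain G A (n + 1) :=
  fun a h => ∑ j ∈ Finset.range (n + 1), (-1 : ℂ) ^ j *
    f (fun i : Fin (n + 1) =>
        if (i : ℕ) < j then a i.castSucc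
        else if (i : ℕ) = j then a i.castSucc * a i.succ
        else a i.succ) h

/-- The equivariant Hochschild differential:
`(b_H f)(a⁰, …, aⁿ⁺¹ | h) = (b' f)(a⁰, …, aⁿ⁺¹ | h)
  + (-1)^{n+1} f ((h⁻¹·aⁿ⁺¹)·a⁰, a¹, …, aⁿ | h)`. -/
noncomputable def bH {n : ℕ} (f : Cochain G A n) : Cochain G A (n + 1) :=
  fun a h => bPrime f a h +
    (-1 : ℂ) ^ (n + 1) *
      f (Fin.cons ((h⁻¹ • a (Fin.last (n + 1))) * a 0)
          (fun i : Fin n => a i.succ.castSucc)) h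

/-- The operator `B₀` on `(n+1)`-cochains:
`(B₀ f)(a⁰, …, aⁿ | h) = f (1, a⁰, …, aⁿ | h) - (-1)^{n+1} f (a⁰, …, aⁿ, 1 | h)`. -/
def B0 {n : ℕ} (f : Cochain G A (n + 1)) : Cochain G A n :=
  fun a h => f (Fin.cons 1 a) h - (-1 : ℂ) ^ (n + 1) * f (Fin.snoc a 1) h

/-- The equivariant cyclic antisymmetrization on `n`-cochains:
`A_H = ∑_{j=0}^n (-1)^{nj} λ_H^j`. -/
noncomputable def AH {n : ℕ} (f : Cochain G A n) : Cochain G A n :=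
  fun a h => ∑ j ∈ Finset.range (n + 1), (-1 : ℂ) ^ (n * j) * (lamH^[j] f) a h

end

/-! Both sides are evaluated by splitting off the inserted unit: in `b_H f (1, a)` the first face
returns `f a` and the twisted face returns `λ_H f a`, while in `b_H f (a, 1)` the last face and the
twisted face both return `f a` with opposite signs. The remaining faces merge two entries of `a`
and cancel in pairs against `b' (B₀ f)`. -/

section Tuples

variable {A : Type*} {n : ℕ}

def mulAdjacent [Mul A] (a : Fin (n + 1) → A) (j : ℕ) : Fin n → A := fun i =>
  if (i : ℕ) < j then a i.castSucc
  else if (i : ℕ) = j then a i.castSucc * a i.succ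
  else a i.succ

variable [MulOneClass A]

@[simp]
theorem mulAdjacent_cons_one_zero (a : Fin (n + 1) → A) :
    mulAdjacent (Fin.cons 1 a : Fin (n + 2) → A) 0 = a := by
  funext i
  induction i using Fin.cases <;> simp [mulAdjacent]

@[simp]
theorem mulAdjacent_cons_one_succ (a : Fin (n + 1) → A) (j : ℕ) :
    mulAdjacent (Fin.cons 1 a : Fin (n + 2) → A) (j + 1) = Fin.cons 1 (mulAdjacent a j) := by
  funext i
  induction i using Fin.cases <;> simp [mulAdjacent]

theorem mulAdjacent_snoc_one_of_lt (a : Fin (n + 1) → A) {j : ℕ} (hj : j < n) :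
    mulAdjacent (Fin.snoc a 1 : Fin (n + 2) → A) j = Fin.snoc (mulAdjacent a j) 1 := by
  funext i
  induction i using Fin.lastCases with
  | last => simp [mulAdjacent, Fin.succ_last, hj.not_gt, hj.ne']
  | cast k => simp only [mulAdjacent, Fin.snoc_castSucc, Fin.succ_castSucc, Fin.val_castSucc]

@[simp]
theorem mulAdjacent_snoc_one_self (a : Fin (n + 1) → A) :
    mulAdjacent (Fin.snoc a 1 : Fin (n + 2) → A) n = a := by
  funext i
  induction i using Fin.lastCases with
  | last => simp [mulAdjacent, Fin.succ_last]
  | cast k => simp only [mulAdjacent, Fin.snoc_castSucc, Fin.succ_castSucc, Fin.val_castSucc,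
    k.isLt, if_true]

end Tuples

section TwistedFace

variable {G A : Type*} {n : ℕ}

def twistedFace [SMul G A] [Mul A] (g : G) (a : Fin (n + 2) → A) : Fin (n + 1) → A :=
  Fin.cons (g • a (Fin.last (n + 1)) * a 0) (fun i : Fin n => a i.succ.castSucc)

theorem twistedFace_cons_one [SMul G A] [MulOneClass A] (g : G) (a : Fin (n + 1) → A) :
    twistedFace g (Fin.cons 1 a) = Fin.cons (g • a (Fin.last n)) (Fin.init a) := by
  funext i
  induction i using Fin.cases <;> simp [twistedFace, ← Fin.succ_last, Fin.init]

theorem twistedFace_snoc_one [Monoid G] [Monoid A] [MulDistribMulAction G A] (g : G)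
    (a : Fin (n + 1) → A) : twistedFace g (Fin.snoc a 1) = a := by
  funext i
  induction i using Fin.cases with
  | zero => simp [twistedFace, Fin.snoc_apply_zero]
  | succ k => simp only [twistedFace, Fin.cons_succ, Fin.snoc_castSucc]

end TwistedFace

section Cochains

variable {G A : Type*} [Ring A] {n : ℕ}

def consOne (f : Cochain G A (n + 1)) : Cochain G A n :=
  fun a h => f (Fin.cons 1 a) h

def snocOne (f : Cochain G A (n + 1)) : Cochain G A n :=
  fun a h => f (Fin.snoc a 1) h

theorem bPrime_apply (f : Cochain G A n) (a : Fin (n + 2) → A) (h : G) :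
    bPrime f a h = ∑ j ∈ Finset.range (n + 1), (-1 : ℂ) ^ j * f (mulAdjacent a j) h :=
  rfl

theorem B0_apply (f : Cochain G A (n + 1)) (a : Fin (n + 1) → A) (h : G) :
    B0 f a h = consOne f a h - (-1 : ℂ) ^ (n + 1) * snocOne f a h :=
  rfl

theorem bPrime_B0 (f : Cochain G A (n + 1)) (a : Fin (n + 2) → A) (h : G) :
    bPrime (B0 f) a h = bPrime (consOne f) a h - (-1 : ℂ) ^ (n + 1) * bPrime (snocOne f) a h := by
  simp only [bPrime_apply, B0_apply, Finset.mul_sum, ← Finset.sum_sub_distrib]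
  exact Finset.sum_congr rfl fun j _ => by ring

theorem bPrime_cons_one (f : Cochain G A (n + 1)) (a : Fin (n + 2) → A) (h : G) :
    bPrime f (Fin.cons 1 a) h = f a h - bPrime (consOne f) a h := by
  rw [bPrime_apply, Finset.sum_range_succ', bPrime_apply]
  simp only [mulAdjacent_cons_one_succ, mulAdjacent_cons_one_zero, pow_succ, pow_zero, one_mul,
    mul_neg_one, neg_mul, Finset.sum_neg_distrib, consOne]
  ring

theorem bPrime_snoc_one (f : Cochain G A (n + 1)) (a : Fin (n + 2) → A) (h : G) :
    bPrime f (Fin.snoc a 1) h = bPrime (snocOne f) a h + (-1 : ℂ) ^ (n + 1) * f a h := by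
  rw [bPrime_apply, Finset.sum_range_succ, mulAdjacent_snoc_one_self, bPrime_apply]
  congr 1
  exact Finset.sum_congr rfl fun j hj => by
    rw [mulAdjacent_snoc_one_of_lt a (Finset.mem_range.mp hj)]; rfl

variable [Group G] [MulSemiringAction G A]

theorem bH_apply (f : Cochain G A n) (a : Fin (n + 2) → A) (h : G) :
    bH f a h = bPrime f a h + (-1 : ℂ) ^ (n + 1) * f (twistedFace h⁻¹ a) h :=
  rfl

theorem lamH_apply (f : Cochain G A n) (a : Fin (n + 1) → A) (h : G) :
    lamH f a h = f (Fin.cons (h⁻¹ • a (Fin.last n)) (Fin.init a)) h :=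
  rfl

theorem bH_cons_one (f : Cochain G A (n + 1)) (a : Fin (n + 2) → A) (h : G) :
    bH f (Fin.cons 1 a) h = f a h - bPrime (consOne f) a h + (-1 : ℂ) ^ (n + 2) * lamH f a h := by
  rw [bH_apply, bPrime_cons_one, twistedFace_cons_one, lamH_apply]

theorem bH_snoc_one (f : Cochain G A (n + 1)) (a : Fin (n + 2) → A) (h : G) :
    bH f (Fin.snoc a 1) h = bPrime (snocOne f) a h := by
  rw [bH_apply, bPrime_snoc_one, twistedFace_snoc_one]
  ring

end Cochains

theorem B0_bH_add_bPrime_B0_general {G A : Type*} [Group G] [Ring A]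
    [MulSemiringAction G A] {m : ℕ}
    (f : Cochain G A (m + 1)) :
    ∀ (a : Fin (m + 2) → A) (h : G),
      B0 (bH f) a h + bPrime (B0 f) a h
        = f a h + (-1 : ℂ) ^ (m + 1 + 1) * lamH f a h := by
  intro a h
  have hB0 : B0 (bH f) a h = bH f (Fin.cons 1 a) h - (-1 : ℂ) ^ (m + 2) * bH f (Fin.snoc a 1) h :=
    rfl
  rw [hB0, bH_cons_one, bH_snoc_one, bPrime_B0]
  ring

/-- For `n = m + 1 ≥ 1` and an equivariant `n`-cochain `f`,
`B₀(b_H f) + b'(B₀ f) = f + (-1)^{n+1} λ_H f`. -/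
theorem B0_bH_add_bPrime_B0 {G A : Type*} [Group G] [Ring A] [Algebra ℂ A]
    [MulSemiringAction G A] [SMulCommClass G ℂ A] {m : ℕ}
    (f : Cochain G A (m + 1)) (hf : IsEquivariantCochain f) :
    ∀ (a : Fin (m + 2) → A) (h : G),
      B0 (bH f) a h + bPrime (B0 f) a h
        = f a h + (-1 : ℂ) ^ (m + 1 + 1) * lamH f a h :=
  B0_bH_add_bPrime_B0_general f
end

section
/- Let G be a group, A a unital associative ℂ-algebra, and let G act on A by ℂ-algebra automorphisms (written g·a). Let n ∈ ℕ and let f : A^{n+1} → (G → ℂ) be an equivariant n-cochain. Then b_H(A_H f) = A_H(b' f), as functions A^{n+2} → (G → ℂ), where A_H is taken with its degree-n formula on the left and its degree-(n+1) formula on the right. -/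
section

variable {G A : Type*} [Group G] [Ring A] [Algebra ℂ A] [MulSemiringAction G A]

set_option linter.unusedSectionVars false

namespace BHAux

/-- the rotation of an argument tuple -/
def rot {n : ℕ} (h : G) (a : Fin (n + 1) → A) : Fin (n + 1) → A :=
  Fin.cons (h⁻¹ • a (Fin.last n)) (Fin.init a)

def dmul {n : ℕ} (m : ℕ) (a : Fin (n + 2) → A) : Fin (n + 1) → A :=
  fun i => if (i : ℕ) < m then a i.castSucc
    else if (i : ℕ) = m then a i.castSucc * a i.succ
    else a i.succ

def dlastArg {n : ℕ} (h : G) (a : Fin (n + 2) → A) : Fin (n + 1) → A :=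
  Fin.cons ((h⁻¹ • a (Fin.last (n + 1))) * a 0) (fun i : Fin n => a i.succ.castSucc)

noncomputable def face {n : ℕ} (m : ℕ) (f : Cochain G A n) : Cochain G A (n + 1) :=
  fun a h => if m ≤ n then f (dmul m a) h else f (dlastArg h a) h

lemma lamH_apply {n : ℕ} (f : Cochain G A n) (a : Fin (n + 1) → A) (h : G) :
    lamH f a h = f (rot h a) h := rfl

lemma rot_zero {n : ℕ} (h : G) (a : Fin (n + 1) → A) :
    rot h a 0 = h⁻¹ • a (Fin.last n) := rfl

lemma rot_succ {n : ℕ} (h : G) (a : Fin (n + 1) → A) (i : Fin n) :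
    rot h a i.succ = a i.castSucc := by
  simp [rot, Fin.init]

lemma lamH_iter {n : ℕ} (k : ℕ) (f : Cochain G A n) (a : Fin (n + 1) → A) (h : G) :
    (lamH^[k] f) a h = f ((rot h)^[k] a) h := by
  induction k generalizing f with
  | zero => rfl
  | succ k ih =>
    rw [Function.iterate_succ_apply, ih (lamH f), Function.iterate_succ_apply']
    rfl

lemma dmul_zero_rot {n : ℕ} (h : G) (a : Fin (n + 2) → A) :
    dmul 0 (rot h a) = dlastArg h a := by
  funext i
  refine Fin.cases ?_ (fun j => ?_) i
  · show rot h a (Fin.castSucc 0) * rot h a (Fin.succ 0) = _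
    rw [show (Fin.castSucc 0 : Fin (n+2)) = 0 from rfl, rot_zero, rot_succ]
    simp [dlastArg]
  · show rot h a (Fin.succ j).succ = _
    rw [rot_succ]
    simp [dlastArg]

lemma dmul_rot {n : ℕ} (m : ℕ) (h1 : 1 ≤ m) (h2 : m ≤ n) (h : G) (a : Fin (n + 2) → A) :
    dmul m (rot h a) = rot h (dmul (m - 1) a) := by
  funext i
  refine Fin.cases ?_ (fun j => ?_) i
  · have : ((0 : Fin (n+1)) : ℕ) < m := h1
    show (if ((0 : Fin (n+1)) : ℕ) < m then rot h a (Fin.castSucc 0) else _) = _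
    rw [if_pos this, show (Fin.castSucc 0 : Fin (n+2)) = 0 from rfl, rot_zero, rot_zero]
    congr 1
    show a (Fin.last (n+1)) = dmul (m-1) a (Fin.last n)
    have hlt : ¬ ((Fin.last n : ℕ) < m - 1) := by simp [Fin.last]; omega
    have heq : ¬ ((Fin.last n : ℕ) = m - 1) := by simp [Fin.last]; omega
    rw [dmul, if_neg hlt, if_neg heq, Fin.succ_last]
  · show dmul m (rot h a) j.succ = dmul (m-1) a j.castSucc
    have hrhs : rot h (dmul (m-1) a) j.succ = dmul (m-1) a j.castSucc := rot_succ ..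
    rw [dmul, dmul]
    simp only [Fin.val_succ, Fin.coe_castSucc]
    rcases lt_trichotomy ((j : ℕ) + 1) m with hc | hc | hc
    · rw [if_pos hc, if_pos (by omega)]
      rw [← Fin.succ_castSucc, rot_succ]
    · rw [if_neg (by omega), if_pos (by omega), if_neg (by omega), if_pos (by omega)]
      rw [← Fin.succ_castSucc, rot_succ, rot_succ, Fin.succ_castSucc]
    · rw [if_neg (by omega), if_neg (by omega), if_neg (by omega), if_neg (by omega)]
      rw [rot_succ, Fin.succ_castSucc]

lemma dlast_rot {n : ℕ} (h : G) (a : Fin (n + 2) → A) :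
    dlastArg h (rot h a) = rot h (dmul n a) := by
  funext i
  refine Fin.cases ?_ (fun j => ?_) i
  · show (h⁻¹ • rot h a (Fin.last (n+1))) * rot h a 0 = h⁻¹ • dmul n a (Fin.last n)
    rw [show Fin.last (n+1) = (Fin.last n).succ from (Fin.succ_last n).symm, rot_succ, rot_zero,
      ← smul_mul']
    congr 1
    rw [dmul, if_neg (by simp [Fin.last]), if_pos (by simp [Fin.last]), Fin.succ_last]
  · show rot h a (Fin.succ j).castSucc = rot h (dmul n a) j.succ
    rw [rot_succ, ← Fin.succ_castSucc, rot_succ, dmul,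
      if_pos (by simpa using j.isLt)]

lemma face_apply_le {n : ℕ} {m : ℕ} (hm : m ≤ n) (f : Cochain G A n) (a : Fin (n+2) → A)
    (h : G) : face m f a h = f (dmul m a) h := if_pos hm

lemma face_apply_gt {n : ℕ} {m : ℕ} (hm : ¬ m ≤ n) (f : Cochain G A n) (a : Fin (n+2) → A)
    (h : G) : face m f a h = f (dlastArg h a) h := if_neg hm

lemma lamH_face_zero {n : ℕ} (f : Cochain G A n) :
    lamH (face 0 f) = face (n + 1) f := by
  funext a h
  rw [lamH_apply, face_apply_le (Nat.zero_le n), dmul_zero_rot,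
    face_apply_gt (by omega)]

lemma lamH_face {n : ℕ} (m : ℕ) (h1 : 1 ≤ m) (h2 : m ≤ n + 1) (f : Cochain G A n) :
    lamH (face m f) = face (m - 1) (lamH f) := by
  funext a h
  rw [lamH_apply]
  rcases Nat.lt_or_ge m (n + 1) with hc | hc
  · rw [face_apply_le (by omega), dmul_rot m h1 (by omega), face_apply_le (by omega),
      lamH_apply]
  · have hm : m = n + 1 := le_antisymm h2 hc
    subst hm
    rw [face_apply_gt (by omega), dlast_rot, face_apply_le (by omega), lamH_apply]
    norm_num

lemma iter_lamH_face {n : ℕ} (t m : ℕ) (htm : t ≤ m) (h2 : m ≤ n + 1) (f : Cochain G A n) :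
    lamH^[t] (face m f) = face (m - t) (lamH^[t] f) := by
  induction t generalizing m f with
  | zero => simp
  | succ t ih =>
    rw [Function.iterate_succ_apply, lamH_face m (by omega) h2,
      ih (m - 1) (by omega) (by omega), show m - 1 - t = m - (t + 1) from by omega,
      Function.iterate_succ_apply]

lemma iter_lamH_face_over {n : ℕ} (k i : ℕ) (hi : i ≤ n) (hik : i < k) (hk : k ≤ n + 1)
    (f : Cochain G A n) :
    lamH^[k] (face i f) = face (n + 2 + i - k) (lamH^[k - 1] f) := by
  obtain ⟨t, rfl⟩ : ∃ t, k = (t + 1) + i := ⟨k - 1 - i, by omega⟩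
  rw [Function.iterate_add_apply, iter_lamH_face i i le_rfl (by omega), Nat.sub_self,
    Function.iterate_succ_apply, lamH_face_zero,
    iter_lamH_face t (n + 1) (by omega) le_rfl, ← Function.iterate_add_apply,
    show n + 2 + i - (t + 1 + i) = n + 1 - t from by omega,
    show t + 1 + i - 1 = t + i from by omega]

lemma neg_one_pow_add_two_mul (e j : ℕ) : ((-1 : ℂ)) ^ (e + 2 * j) = (-1 : ℂ) ^ e := by
  rw [pow_add, pow_mul]
  norm_num

lemma bH_eq {n : ℕ} (g : Cochain G A n) (a : Fin (n + 2) → A) (h : G) :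
    bH g a h = ∑ j ∈ Finset.range (n + 2), (-1 : ℂ) ^ j * face j g a h := by
  rw [Finset.sum_range_succ]
  show bPrime g a h + _ = _
  congr 1
  · refine Finset.sum_congr rfl fun j hj => ?_
    rw [face_apply_le (Nat.lt_succ_iff.mp (Finset.mem_range.mp hj))]
    rfl
  · rw [face_apply_gt (by omega)]
    rfl

lemma face_AH {n : ℕ} (j : ℕ) (f : Cochain G A n) (a : Fin (n + 2) → A) (h : G) :
    face j (AH f) a h
      = ∑ k ∈ Finset.range (n + 1), (-1 : ℂ) ^ (n * k) * face j (lamH^[k] f) a h := by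
  unfold face AH
  split <;> rfl

lemma lamH_iter_bPrime {n : ℕ} (k : ℕ) (f : Cochain G A n) (a : Fin (n + 2) → A) (h : G) :
    (lamH^[k] (bPrime f)) a h
      = ∑ i ∈ Finset.range (n + 1), (-1 : ℂ) ^ i * (lamH^[k] (face i f)) a h := by
  rw [lamH_iter]
  refine Finset.sum_congr rfl fun i hi => ?_
  rw [lamH_iter, face_apply_le (Nat.lt_succ_iff.mp (Finset.mem_range.mp hi))]
  rfl


theorem main {n : ℕ} (f : Cochain G A n) : bH (AH f) = AH (bPrime f) := by
  funext a h
  rw [bH_eq]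
  calc
    ∑ j ∈ Finset.range (n + 2), (-1 : ℂ) ^ j * face j (AH f) a h
        = ∑ p ∈ Finset.range (n + 2) ×ˢ Finset.range (n + 1),
            (-1 : ℂ) ^ (p.1 + n * p.2) * face p.1 (lamH^[p.2] f) a h := by
          rw [Finset.sum_product]
          refine Finset.sum_congr rfl fun j _ => ?_
          rw [face_AH, Finset.mul_sum]
          refine Finset.sum_congr rfl fun k _ => ?_
          rw [pow_add]
          ring
    _ = ∑ p ∈ Finset.range (n + 2) ×ˢ Finset.range (n + 1),
            (-1 : ℂ) ^ ((n + 1) * p.1 + p.2) * (lamH^[p.1] (face p.2 f)) a h := by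
          refine Finset.sum_nbij'
            (i := fun p => if p.1 + p.2 ≤ n then (p.2, p.1 + p.2)
              else (p.2 + 1, p.1 + p.2 - (n + 1)))
            (j := fun q => if q.1 ≤ q.2 then (q.2 - q.1, q.1)
              else (n + 2 + q.2 - q.1, q.1 - 1)) ?_ ?_ ?_ ?_ ?_
          · rintro ⟨m, j⟩ hp
            simp only [Finset.mem_product, Finset.mem_range] at hp ⊢
            split_ifs <;> constructor <;> dsimp only <;> omega
          · rintro ⟨k, i⟩ hq
            simp only [Finset.mem_product, Finset.mem_range] at hq ⊢
            split_ifs <;> constructor <;> dsimp only <;> omega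
          · rintro ⟨m, j⟩ hp
            simp only [Finset.mem_product, Finset.mem_range] at hp
            dsimp only
            by_cases h1 : m + j ≤ n
            · rw [if_pos h1, if_pos (by dsimp only; omega)]
              dsimp only
              rw [Prod.mk.injEq]
              omega
            · rw [if_neg h1, if_neg (by dsimp only; omega)]
              dsimp only
              rw [Prod.mk.injEq]
              omega
          · rintro ⟨k, i⟩ hq
            simp only [Finset.mem_product, Finset.mem_range] at hq
            dsimp only
            by_cases h1 : k ≤ i
            · rw [if_pos h1, if_pos (by dsimp only; omega)]
              dsimp only
              rw [Prod.mk.injEq]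
              omega
            · rw [if_neg h1, if_neg (by dsimp only; omega)]
              dsimp only
              rw [Prod.mk.injEq]
              omega
          · rintro ⟨m, j⟩ hp
            simp only [Finset.mem_product, Finset.mem_range] at hp
            dsimp only
            by_cases h1 : m + j ≤ n
            · rw [if_pos h1]
              dsimp only
              rw [iter_lamH_face j (m + j) (by omega) (by omega),
                show m + j - j = m from by omega]
              congr 1
              have e : ∀ t : ℕ, t + j + (m + j) = m + t + 2 * j := fun t => by omega
              rw [show (n + 1) * j + (m + j) = (m + n * j) + 2 * j from by
                  rw [add_mul, one_mul]; exact e (n * j),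
                neg_one_pow_add_two_mul]
            · rw [if_neg h1]
              dsimp only
              obtain ⟨i, hi⟩ : ∃ i, m + j = (n + 1) + i := ⟨m + j - (n + 1), by omega⟩
              rw [show m + j - (n + 1) = i from by omega,
                iter_lamH_face_over (j + 1) i (by omega) (by omega) (by omega),
                show n + 2 + i - (j + 1) = m from by omega,
                show (j + 1) - 1 = j from rfl]
              congr 1
              have h2 : (n + 1) * (j + 1) = n * j + (n + j + 1) := by ring
              have e : ∀ t : ℕ, t + (n + j + 1) + i = m + t + 2 * j := fun t => by omega
              rw [show (n + 1) * (j + 1) + i = (m + n * j) + 2 * j from by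
                  rw [h2]; exact e (n * j),
                neg_one_pow_add_two_mul]
    _ = AH (bPrime f) a h := by
          show _ = ∑ k ∈ Finset.range (n + 1 + 1), (-1 : ℂ) ^ ((n + 1) * k)
            * (lamH^[k] (bPrime f)) a h
          rw [Finset.sum_product]
          refine Finset.sum_congr rfl fun k _ => ?_
          rw [lamH_iter_bPrime, Finset.mul_sum]
          refine Finset.sum_congr rfl fun i _ => ?_
          rw [pow_add]
          ring

end BHAux

end

/-- For an equivariant `n`-cochain `f`, `b_H (A_H f) = A_H (b' f)`. -/
theorem bH_AH_eq_AH_bPrime {G A : Type*} [Group G] [Ring A] [Algebra ℂ A]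
    [MulSemiringAction G A] [SMulCommClass G ℂ A] {n : ℕ}
    (f : Cochain G A n) (hf : IsEquivariantCochain f) :
    bH (AH f) = AH (bPrime f) :=
  BHAux.main f
end
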